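/- Let weights w₁,…,wₘ ∈ ℂ^× and let W = diag(w₁,…,wₘ). For partitions λ, ν of length at most n and x₁,…,xₘ ∈ ℂ, the determinant of the n×n matrix with (i,j)-entry ∑_{k=1}^m |wₖ|² conj(xₖ)^{λᵢ+n−i} xₖ^{νⱼ+n−j} equals ∑_{k ∈ C([m],n)} |w_k|² conj(s_λ(x_k)) s_ν(x_k) |V(x_k)|², where |w_k|² = ∏_{j=1}^n |w_{kⱼ}|². -/

import Mathlib

open scoped BigOperators ComplexConjugate Matrix

/-- Vandermonde product `V(z) = ∏_{i<j} (z_i − z_j)`. -/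
noncomputable def vand {n : ℕ} (z : Fin n → ℂ) : ℂ :=
  ∏ i : Fin n, ∏ j ∈ Finset.Ioi i, (z i - z j)

/-- Schur polynomial `s_λ(z) = det(z_i^{λ_j + n−1−j}) / V(z)` (junk value 0 if `V(z)=0`). -/
noncomputable def schur {n : ℕ} (lam : Fin n → ℕ) (z : Fin n → ℂ) : ℂ :=
  Matrix.det (Matrix.of fun i j : Fin n => z i ^ (lam j + (n - 1 - (j : ℕ)))) / vand z

/-- The subvector of `x` indexed by an `n`-element subset of `Fin m` (in increasing order). -/
def subvec {m n : ℕ} (x : Fin m → ℂ) (s : {t : Finset (Fin m) // t.card = n}) :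
    Fin n → ℂ := fun i => x (s.1.orderEmbOfFin s.2 i)

/-!
With `Q k j = w k * x k ^ (λ j + n - 1 - j)` and `P` defined in the same way from `ν`, the
matrix is `Qᴴ P`. The Cauchy–Binet formula expands its determinant over the `n`-subsets `k`.
Each maximal minor of `P` is `(∏ j, w (k j)) s_ν(x_k) V(x_k)` by the bialternant formula,
and the corresponding minor of `Qᴴ` is the conjugate of the analogous minor of `Q`.
-/

open Matrix Finset

section Subsets

variable {ι : Type*} [LinearOrder ι] {n : ℕ}

theorem image_orderEmbOfFin_comp_perm (s : {t : Finset ι // t.card = n})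
    (σ : Equiv.Perm (Fin n)) : univ.image (s.1.orderEmbOfFin s.2 ∘ σ) = s.1 := by
  rw [← image_image, image_univ_equiv, image_orderEmbOfFin_univ]

theorem injective_orderEmbOfFin_comp_perm :
    Function.Injective fun p : {t : Finset ι // t.card = n} × Equiv.Perm (Fin n) =>
      p.1.1.orderEmbOfFin p.1.2 ∘ p.2 := by
  rintro ⟨s, σ⟩ ⟨t, τ⟩ h
  obtain rfl : s = t := Subtype.ext <| by
    rw [← image_orderEmbOfFin_comp_perm s σ, ← image_orderEmbOfFin_comp_perm t τ]
    exact congrArg (univ.image ·) h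
  obtain rfl : σ = τ := Equiv.ext fun i => (s.1.orderEmbOfFin s.2).injective (congrFun h i)
  rfl

theorem exists_orderEmbOfFin_comp_perm_eq {f : Fin n → ι}
    (hf : Function.Injective f) :
    ∃ p : {t : Finset ι // t.card = n} × Equiv.Perm (Fin n),
      p.1.1.orderEmbOfFin p.1.2 ∘ p.2 = f := by
  set s := univ.image f
  have hs : s.card = n := by rw [card_image_of_injective _ hf, card_univ, Fintype.card_fin]
  let g : Fin n → Fin n := fun i =>
    (s.orderIsoOfFin hs).symm ⟨f i, mem_image_of_mem f (mem_univ i)⟩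
  have hg : Function.Injective g := fun i j hij => hf <| by
    simpa [g] using congrArg (fun k => (s.orderIsoOfFin hs k : ι)) hij
  refine ⟨⟨⟨s, hs⟩, Equiv.ofBijective g (Finite.injective_iff_bijective.mp hg)⟩,
    funext fun i => ?_⟩
  simp [g, ← coe_orderIsoOfFin_apply]

theorem sum_injective_eq_sum_subset_perm [Fintype ι] {M : Type*} [AddCommMonoid M]
    (g : (Fin n → ι) → M) :
    ∑ f with Function.Injective f, g f =
      ∑ p : {t : Finset ι // t.card = n} × Equiv.Perm (Fin n),
        g (p.1.1.orderEmbOfFin p.1.2 ∘ p.2) := by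
  symm
  refine sum_nbij (fun p => p.1.1.orderEmbOfFin p.1.2 ∘ p.2) (fun p _ => ?_)
    (injective_orderEmbOfFin_comp_perm.injOn) (fun f hf => ?_) (fun _ _ => rfl)
  · simpa using (p.1.1.orderEmbOfFin p.1.2).injective.comp p.2.injective
  · obtain ⟨p, hp⟩ := exists_orderEmbOfFin_comp_perm_eq (mem_filter.mp hf).2
    exact ⟨p, mem_coe.mpr (mem_univ p), hp⟩

end Subsets

section CauchyBinet

variable {R : Type*} [CommRing R]

theorem det_mul_eq_sum_prod_mul_det_submatrix {n ι : Type*} [Fintype n] [DecidableEq n]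
    [Fintype ι] (A : Matrix n ι R) (B : Matrix ι n R) :
    (A * B).det = ∑ f : n → ι, (∏ i, A i (f i)) * (B.submatrix f id).det := by
  have hrows : A * B = fun i => ∑ k, A i k • B k := by
    ext i j
    simp [mul_apply]
  calc (A * B).det = detRowAlternating fun i => ∑ k, A i k • B k := by rw [hrows]; rfl
    _ = ∑ f : n → ι, detRowAlternating fun i => A i (f i) • B (f i) :=
      detRowAlternating.toMultilinearMap.map_sum _
    _ = _ := by simp only [AlternatingMap.map_smul_univ, smul_eq_mul]; rfl

theorem det_submatrix_eq_zero_of_not_injective {n ι : Type*} [Fintype n] [DecidableEq n]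
    (B : Matrix ι n R) {f : n → ι} (hf : ¬ Function.Injective f) :
    (B.submatrix f id).det = 0 := by
  obtain ⟨i, j, hij, hne⟩ : ∃ i j, f i = f j ∧ i ≠ j := by
    simpa [Function.Injective] using hf
  exact det_zero_of_row_eq hne (by ext k; simp [hij])

theorem sum_perm_prod_mul_det_submatrix {n : Type*} [Fintype n] [DecidableEq n]
    (C D : Matrix n n R) :
    ∑ σ : Equiv.Perm n, (∏ i, C i (σ i)) * (D.submatrix σ id).det = C.det * D.det := by
  simp only [det_permute, ← det_transpose C, det_apply' Cᵀ, sum_mul]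
  refine sum_congr rfl fun σ _ => ?_
  simp only [transpose_apply]
  ring

theorem det_mul_eq_sum_det_submatrix_mul_det_submatrix {ι : Type*} [Fintype ι]
    [LinearOrder ι] {n : ℕ} (A : Matrix (Fin n) ι R) (B : Matrix ι (Fin n) R) :
    (A * B).det = ∑ s : {t : Finset ι // t.card = n},
      (A.submatrix id (s.1.orderEmbOfFin s.2)).det *
        (B.submatrix (s.1.orderEmbOfFin s.2) id).det := by
  have hvanish : ∀ f : Fin n → ι, ¬ Function.Injective f →
      (∏ i, A i (f i)) * (B.submatrix f id).det = 0 := fun f hf => by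
    rw [det_submatrix_eq_zero_of_not_injective B hf, mul_zero]
  rw [det_mul_eq_sum_prod_mul_det_submatrix,
    ← sum_filter_of_ne fun f _ h => not_imp_comm.mp (hvanish f) h,
    sum_injective_eq_sum_subset_perm, Fintype.sum_prod_type]
  refine sum_congr rfl fun s _ => ?_
  exact sum_perm_prod_mul_det_submatrix (A.submatrix id (s.1.orderEmbOfFin s.2))
    (B.submatrix (s.1.orderEmbOfFin s.2) id)

end CauchyBinet

theorem det_pow_eq_schur_mul_vand {n : ℕ} (lam : Fin n → ℕ) (z : Fin n → ℂ) :
    det (of fun i j : Fin n => z i ^ (lam j + (n - 1 - (j : ℕ)))) = schur lam z * vand z := by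
  by_cases h : vand z = 0
  · obtain ⟨i, -, j, hij, hzij⟩ : ∃ i ∈ univ, ∃ j ∈ Ioi i, z i - z j = 0 := by
      simpa only [vand, prod_eq_zero_iff] using h
    rw [h, mul_zero]
    exact det_zero_of_row_eq (mem_Ioi.mp hij).ne <| by
      ext k
      simp [sub_eq_zero.mp hzij]
  · rw [schur, div_mul_cancel₀ _ h]

section WeightedPowMatrix

variable {ι : Type*} {n : ℕ}

def weightedPowMatrix (w x : ι → ℂ) (lam : Fin n → ℕ) : Matrix ι (Fin n) ℂ :=
  of fun k j => w k * x k ^ (lam j + (n - 1 - (j : ℕ)))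

theorem det_weightedPowMatrix_submatrix (w x : ι → ℂ) (lam : Fin n → ℕ)
    (e : Fin n → ι) :
    ((weightedPowMatrix w x lam).submatrix e id).det =
      (∏ j, w (e j)) * (schur lam (x ∘ e) * vand (x ∘ e)) := by
  rw [← det_pow_eq_schur_mul_vand, ← det_mul_column]
  rfl

theorem conjTranspose_weightedPowMatrix_mul [Fintype ι] (w x : ι → ℂ)
    (lam nu : Fin n → ℕ) :
    (weightedPowMatrix w x lam)ᴴ * weightedPowMatrix w x nu = of fun i j =>
      ∑ k, ((‖w k‖ : ℝ) : ℂ) ^ 2 *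
        (conj (x k) ^ (lam i + (n - 1 - (i : ℕ))) * x k ^ (nu j + (n - 1 - (j : ℕ)))) := by
  ext i j
  simp only [mul_apply, conjTranspose_apply, weightedPowMatrix, of_apply, star_mul', star_pow,
    ← Complex.conj_mul']
  exact sum_congr rfl fun k _ => by simp only [Complex.star_def]; ring

end WeightedPowMatrix

theorem weighted_det_eq_sum_schur_general (m n : ℕ)
    (w : Fin m → ℂ)
    (lam nu : Fin n → ℕ) (x : Fin m → ℂ) :
    Matrix.det (Matrix.of fun i j : Fin n =>
        ∑ k : Fin m, ((‖w k‖ : ℝ) : ℂ) ^ 2 *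
          (conj (x k) ^ (lam i + (n - 1 - (i : ℕ))) * x k ^ (nu j + (n - 1 - (j : ℕ))))) =
      ∑ s : {t : Finset (Fin m) // t.card = n},
        (∏ j : Fin n, ((‖w (s.1.orderEmbOfFin s.2 j)‖ : ℝ) : ℂ) ^ 2) *
          (conj (schur lam (subvec x s)) * schur nu (subvec x s) *
            ((‖vand (subvec x s)‖ : ℝ) : ℂ) ^ 2) := by
  rw [← conjTranspose_weightedPowMatrix_mul, det_mul_eq_sum_det_submatrix_mul_det_submatrix]
  refine sum_congr rfl fun s _ => ?_
  have hsubvec : subvec x s = x ∘ s.1.orderEmbOfFin s.2 := rfl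
  rw [hsubvec, ← conjTranspose_submatrix, det_conjTranspose, det_weightedPowMatrix_submatrix,
    det_weightedPowMatrix_submatrix]
  simp only [← Complex.conj_mul', star_mul', star_prod, Complex.star_def, prod_mul_distrib]
  ring

/-- weighted Cauchy–Binet for Schur/Vandermonde sums: for nonzero weights
`w₁,…,wₘ` and partitions `λ, ν` of length at most `n`, the determinant of the matrix with
entries `∑ₖ |wₖ|² conj(xₖ)^{λᵢ+n−i} xₖ^{νⱼ+n−j}` equals
`∑_{k ∈ C([m],n)} |w_k|² conj(s_λ(x_k)) s_ν(x_k) |V(x_k)|²` with `|w_k|² = ∏ⱼ |w_{kⱼ}|²`. -/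
theorem weighted_det_eq_sum_schur (m n : ℕ)
    (w : Fin m → ℂ) (hw : ∀ k, w k ≠ 0)
    (lam nu : Fin n → ℕ) (hlam : Antitone lam) (hnu : Antitone nu) (x : Fin m → ℂ) :
    Matrix.det (Matrix.of fun i j : Fin n =>
        ∑ k : Fin m, ((‖w k‖ : ℝ) : ℂ) ^ 2 *
          (conj (x k) ^ (lam i + (n - 1 - (i : ℕ))) * x k ^ (nu j + (n - 1 - (j : ℕ))))) =
      ∑ s : {t : Finset (Fin m) // t.card = n},
        (∏ j : Fin n, ((‖w (s.1.orderEmbOfFin s.2 j)‖ : ℝ) : ℂ) ^ 2) *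
          (conj (schur lam (subvec x s)) * schur nu (subvec x s) *
            ((‖vand (subvec x s)‖ : ℝ) : ℂ) ^ 2) :=
  weighted_det_eq_sum_schur_general m n w lam nu x
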